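/- Let G be a graph on n vertices with a perfect matching M, let k, l be integers, F ⊆ M, and let (G^F, w_F, k_F) be the weighted vertex cover instance defined by: G^F has vertex classes V₁^F = {v₁ : v ∈ V \ V(F)} and V₂^F = {v₂ : v ∈ V}, edges {v₁,v₂} for v ∈ V \ V(F) and copies {u_i,v_i} of each edge {u,v} ∈ E within each class; w_F(v) = k+1 for v ∈ V₁^F and 1 for v ∈ V₂^F; and k_F = (n/2 − |F|)(k+2) + k. Then G has an odd cycle transversal X with |X| ≤ k such that G − X has color classes (A,B) with |A| ≥ n/2 − l if and only if for some F ⊆ M with |F| ≤ l the graph G^F has a vertex cover of weight at most k_F. -/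

import Mathlib

def PerfM {V : Type*} (G : SimpleGraph V) (M : Set (Sym2 V)) : Prop :=
  M ⊆ G.edgeSet ∧ ∀ v : V, ∃! e, e ∈ M ∧ v ∈ e

/-- The graph `G^F` (with `F` a finite set of matching edges): left copies `v₁` for
`v ∉ V(F)`, right copies `v₂` for all `v`, edges `{v₁,v₂}` for `v ∉ V(F)`, and a copy
of each edge of `G` inside each class. -/
def GF {V : Type*} (G : SimpleGraph V) (F : Finset (Sym2 V)) :
    SimpleGraph ({v : V // ∀ e ∈ F, v ∉ e} ⊕ V) where
  Adj x y :=
    match x, y with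
    | Sum.inl a, Sum.inl b => G.Adj a.1 b.1
    | Sum.inl a, Sum.inr b => a.1 = b
    | Sum.inr a, Sum.inl b => b.1 = a
    | Sum.inr a, Sum.inr b => G.Adj a b
  symm := by
    constructor
    rintro (a | a) (b | b) h
    · exact h.symm
    · exact h
    · exact h
    · exact h.symm
  loopless := by
    constructor
    rintro (a | a) h
    · exact G.loopless.irrefl a.1 h
    · exact G.loopless.irrefl a h


/-! Let `m = n/2 = |M|`. Given `X, A, B`, take `F` to be the matching edges avoiding `A`. As `A`
is independent, every other matching edge contains exactly one vertex of `A`, so `|F| = m - |A|`,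
and `{v₁ : v ∉ A} ∪ {v₂ : v ∈ A ∪ X}` covers `G^F` with weight at most `|A|(k+2) + |X|`.

Conversely, for a cover `C` of `G^F` let `A` (resp. `B`) be the vertices whose left (resp. right)
copy is not in `C`, and `X` the rest; `A` and `B` are independent, and disjoint because of the
edges `v₁v₂`. An independent set meets each matching edge at most once, so with `m' = m - |F|`
we get `|A| ≤ m'` and `|B| ≤ m`, whence `m' ≤ |A| + |X|`. Counting the uncovered copies, the weight
bound becomes `k(m' - |A|) + |X| ≤ k`, which forces `|X| ≤ k` and `|A| = m'`. -/

open Finset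

lemma Finset.sum_sumElim_const {α β M : Type*} [AddCommMonoid M] (C : Finset (α ⊕ β)) (a b : M) :
    ∑ x ∈ C, Sum.elim (fun _ => a) (fun _ => b) x = #C.toLeft • a + #C.toRight • b := by
  conv_lhs => rw [← C.toLeft_disjSum_toRight]
  rw [sum_sumElim, sum_const, sum_const]

lemma le_and_le_of_weight_le {k m a x c : ℕ} (hc : c + a = 2 * m)
    (hw : c * (k + 1) + (a + x) ≤ m * (k + 2) + k) (ha : a ≤ m) (hx : m ≤ a + x) :
    x ≤ k ∧ m ≤ a := by
  obtain ⟨d, rfl⟩ := Nat.exists_eq_add_of_le ha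
  have hkd : k * d + x ≤ k := by nlinarith
  refine ⟨by nlinarith, ?_⟩
  rcases Nat.eq_zero_or_pos d with rfl | hd
  · simp
  · nlinarith

namespace PerfM

variable {V : Type*} {G : SimpleGraph V} {M : Set (Sym2 V)}

noncomputable def edge (hM : PerfM G M) (v : V) : Sym2 V := (hM.2 v).exists.choose

lemma edge_mem (hM : PerfM G M) (v : V) : hM.edge v ∈ M := (hM.2 v).exists.choose_spec.1

lemma mem_edge (hM : PerfM G M) (v : V) : v ∈ hM.edge v := (hM.2 v).exists.choose_spec.2

lemma edge_eq_iff (hM : PerfM G M) {v : V} {e : Sym2 V} (he : e ∈ M) :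
    hM.edge v = e ↔ v ∈ e :=
  ⟨fun h => h ▸ hM.mem_edge v,
    fun hv => (hM.2 v).unique ⟨hM.edge_mem v, hM.mem_edge v⟩ ⟨he, hv⟩⟩

lemma edge_mem_iff (hM : PerfM G M) {v : V} {T : Set (Sym2 V)} (hT : T ⊆ M) :
    hM.edge v ∈ T ↔ ∃ e ∈ T, v ∈ e :=
  ⟨fun h => ⟨_, h, hM.mem_edge v⟩, fun ⟨_, he, hv⟩ => (hM.edge_eq_iff (hT he)).2 hv ▸ he⟩

lemma adj_of_edge_eq (hM : PerfM G M) {u v : V} (huv : u ≠ v) (h : hM.edge u = hM.edge v) :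
    G.Adj u v := by
  have hu : hM.edge u = s(u, v) :=
    (Sym2.mem_and_mem_iff huv).1 ⟨hM.mem_edge u, h ▸ hM.mem_edge v⟩
  exact G.mem_edgeSet.1 (hu ▸ hM.1 (hM.edge_mem u))

lemma injOn_edge (hM : PerfM G M) {A : Set V} (hA : ∀ u ∈ A, ∀ v ∈ A, ¬G.Adj u v) :
    Set.InjOn hM.edge A := fun u hu v hv h =>
  by_contra fun huv => hA u hu v hv (hM.adj_of_edge_eq huv h)

lemma card_le_card_of_indep (hM : PerfM G M) {A : Finset V} (hA : ∀ u ∈ A, ∀ v ∈ A, ¬G.Adj u v)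
    {T : Finset (Sym2 V)} (hAT : ∀ v ∈ A, hM.edge v ∈ T) : #A ≤ #T :=
  card_le_card_of_injOn hM.edge hAT (hM.injOn_edge hA)

section Fintype

variable [Fintype V] [DecidableEq V]

lemma card_filter_edge_mem (hM : PerfM G M) {T : Finset (Sym2 V)} (hT : ↑T ⊆ M) :
    #{v | hM.edge v ∈ T} = 2 * #T := by
  rw [card_eq_sum_card_fiberwise (f := hM.edge) (t := T) fun v hv => by simpa using hv,
    mul_comm, ← smul_eq_mul, ← sum_const]
  refine sum_congr rfl fun e he => ?_
  induction e using Sym2.ind with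
  | _ a b =>
    have hab : G.Adj a b := hM.1 (hT he)
    rw [← card_pair hab.ne]
    congr 1
    ext v
    have hfib : ∀ v, hM.edge v = s(a, b) ↔ v ∈ s(a, b) := fun v => hM.edge_eq_iff (hT he)
    simp only [mem_filter, mem_univ, true_and, hfib, mem_insert, mem_singleton, Sym2.mem_iff]
    exact ⟨And.right, fun h => ⟨(hfib v).2 (Sym2.mem_iff.2 h) ▸ he, h⟩⟩

lemma card_eq_two_mul {M : Finset (Sym2 V)} (hM : PerfM G ↑M) : Fintype.card V = 2 * #M := by
  rw [← hM.card_filter_edge_mem subset_rfl, filter_true_of_mem fun v _ => mem_coe.1 (hM.edge_mem v),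
    card_univ]

lemma card_avoiding {M F : Finset (Sym2 V)} (hM : PerfM G ↑M) (hF : F ⊆ M) :
    Fintype.card {v : V // ∀ e ∈ F, v ∉ e} = 2 * (#M - #F) := by
  rw [Fintype.card_subtype, ← card_sdiff_of_subset hF,
    ← hM.card_filter_edge_mem (coe_subset.2 sdiff_subset)]
  congr 1
  ext v
  have := hM.edge_mem_iff (v := v) (coe_subset.2 hF)
  simp only [mem_coe] at this
  simp [mem_coe.1 (hM.edge_mem v), this]

theorem exists_cover_of_bipartition {M : Finset (Sym2 V)} (hM : PerfM G ↑M) {X A B : Finset V}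
    (hcov : ∀ v, v ∈ A ∨ v ∈ B ∨ v ∈ X) (hA : ∀ u ∈ A, ∀ v ∈ A, ¬G.Adj u v)
    (hB : ∀ u ∈ B, ∀ v ∈ B, ¬G.Adj u v) (k : ℕ) :
    ∃ F ⊆ M, #F + #A = #M ∧ ∃ C : Finset ({v : V // ∀ e ∈ F, v ∉ e} ⊕ V),
      (∀ x y, (GF G F).Adj x y → x ∈ C ∨ y ∈ C) ∧
      ∑ x ∈ C, Sum.elim (fun _ => k + 1) (fun _ => 1) x ≤ #A * (k + 2) + #X := by
  set F := M \ A.image hM.edge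
  have hAF : ∀ a ∈ A, ∀ e ∈ F, a ∉ e := fun a ha e he hae =>
    (mem_sdiff.1 he).2 (mem_image.2 ⟨a, ha, (hM.edge_eq_iff (mem_sdiff.1 he).1).2 hae⟩)
  have hAM : A.image hM.edge ⊆ M := image_subset_iff.2 fun v _ => hM.edge_mem v
  have hFA : #F + #A = #M := by
    have himg : #(A.image hM.edge) = #A := card_image_of_injOn (hM.injOn_edge hA)
    have := card_le_card hAM
    rw [card_sdiff_of_subset hAM]
    omega
  refine ⟨F, sdiff_subset, hFA, (A.subtype _)ᶜ.disjSum (A ∪ X), ?_, ?_⟩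
  · rintro (a | a) (b | b) hab <;>
      simp only [inl_mem_disjSum, inr_mem_disjSum, mem_compl, mem_subtype, mem_union]
    · by_contra! h
      exact hA _ h.1 _ h.2 hab
    · subst hab
      exact (em' _).imp_right Or.inl
    · subst hab
      exact (em _).imp_left Or.inl
    · by_contra! h
      exact hB a ((hcov a).resolve_left h.1.1 |>.resolve_right h.1.2) b
        ((hcov b).resolve_left h.2.1 |>.resolve_right h.2.2) hab
  · rw [sum_sumElim_const, toLeft_disjSum, toRight_disjSum, card_compl, card_subtype,
      filter_true_of_mem hAF, card_avoiding hM sdiff_subset, smul_eq_mul, smul_eq_mul,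
      show 2 * (#M - #F) - #A = #A by omega]
    have := card_union_le A X
    linarith

theorem exists_bipartition_of_cover {M F : Finset (Sym2 V)} (hM : PerfM G ↑M) (hF : F ⊆ M)
    {k : ℕ} {C : Finset ({v : V // ∀ e ∈ F, v ∉ e} ⊕ V)}
    (hC : ∀ x y, (GF G F).Adj x y → x ∈ C ∨ y ∈ C)
    (hw : ∑ x ∈ C, Sum.elim (fun _ => k + 1) (fun _ => 1) x ≤ (#M - #F) * (k + 2) + k) :
    ∃ X A B : Finset V, (∀ v, v ∈ A ∨ v ∈ B ∨ v ∈ X) ∧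
      Disjoint A B ∧ Disjoint A X ∧ Disjoint B X ∧
      (∀ u ∈ A, ∀ v ∈ A, ¬G.Adj u v) ∧ (∀ u ∈ B, ∀ v ∈ B, ¬G.Adj u v) ∧
      #X ≤ k ∧ #M ≤ #A + #F := by
  set A := C.toLeftᶜ.map (Function.Embedding.subtype _)
  set B := C.toRightᶜ
  set X := (A ∪ B)ᶜ
  have hmemA : ∀ v, v ∈ A ↔ ∃ h, Sum.inl ⟨v, h⟩ ∉ C := by simp [A]
  have hmemB : ∀ v, v ∈ B ↔ Sum.inr v ∉ C := by simp [B]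
  have hAB : Disjoint A B := disjoint_left.2 fun v hvA hvB => by
    obtain ⟨h, hv⟩ := (hmemA v).1 hvA
    exact (hC (.inl ⟨v, h⟩) (.inr v) rfl).elim hv ((hmemB v).1 hvB)
  have hA : ∀ u ∈ A, ∀ v ∈ A, ¬G.Adj u v := fun u hu v hv huv => by
    obtain ⟨hu', hu⟩ := (hmemA u).1 hu
    obtain ⟨hv', hv⟩ := (hmemA v).1 hv
    exact (hC (.inl ⟨u, hu'⟩) (.inl ⟨v, hv'⟩) huv).elim hu hv
  have hB : ∀ u ∈ B, ∀ v ∈ B, ¬G.Adj u v := fun u hu v hv huv =>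
    (hC (.inr u) (.inr v) huv).elim ((hmemB u).1 hu) ((hmemB v).1 hv)
  have hcardA : #C.toLeft + #A = 2 * (#M - #F) := by
    rw [card_map, card_add_card_compl, card_avoiding hM hF]
  have hcardB : #C.toRight + #B = 2 * #M := by
    rw [card_add_card_compl, hM.card_eq_two_mul]
  have hpart : #A + #B + #X = 2 * #M := by
    rw [← card_union_of_disjoint hAB, card_add_card_compl, hM.card_eq_two_mul]
  have hAle : #A ≤ #M - #F := by
    rw [← card_sdiff_of_subset hF]
    refine hM.card_le_card_of_indep hA fun v hv => mem_sdiff.2 ⟨hM.edge_mem v, fun hvF => ?_⟩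
    obtain ⟨h, -⟩ := (hmemA v).1 hv
    obtain ⟨e, he, hve⟩ := (hM.edge_mem_iff (coe_subset.2 hF)).1 hvF
    exact h e he hve
  have hBle : #B ≤ #M := hM.card_le_card_of_indep hB fun v _ => hM.edge_mem v
  rw [sum_sumElim_const, smul_eq_mul, smul_eq_mul, mul_one] at hw
  obtain ⟨hXk, hAm⟩ := le_and_le_of_weight_le (k := k) (x := #X) hcardA (by omega) hAle (by omega)
  refine ⟨X, A, B, fun v => ?_, hAB, disjoint_compl_right.mono_right ?_,
    disjoint_compl_right.mono_right ?_, hA, hB, hXk, by omega⟩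
  · by_cases hv : v ∈ A ∪ B
    · simpa [or_assoc] using Or.inl (mem_union.1 hv)
    · exact Or.inr (Or.inr (mem_compl.2 hv))
  all_goals simp [X]

end Fintype

end PerfM

/-- UB ↔ WVC: `G` has an odd cycle transversal `X` with `|X| ≤ k` and color classes
`(A,B)` of `G - X` with `|A| ≥ n/2 - l` iff for some `F ⊆ M` with `|F| ≤ l` the graph
`G^F` has a vertex cover of weight at most `k_F = (n/2 - |F|)(k+2) + k`, where
vertices in the left class weigh `k+1` and those in the right class weigh `1`. -/
theorem stmt15 {V : Type*} [Fintype V] (G : SimpleGraph V)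
    (M : Finset (Sym2 V)) (hM : PerfM G ↑M) (k l : ℕ) :
    (∃ X A B : Finset V,
        (∀ v : V, v ∈ A ∨ v ∈ B ∨ v ∈ X) ∧
        Disjoint A B ∧ Disjoint A X ∧ Disjoint B X ∧
        (∀ u ∈ A, ∀ v ∈ A, ¬ G.Adj u v) ∧ (∀ u ∈ B, ∀ v ∈ B, ¬ G.Adj u v) ∧
        X.card ≤ k ∧ Fintype.card V / 2 ≤ A.card + l) ↔
    (∃ F : Finset (Sym2 V), F ⊆ M ∧ F.card ≤ l ∧
        ∃ C : Finset ({v : V // ∀ e ∈ F, v ∉ e} ⊕ V),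
          (∀ x y, (GF G F).Adj x y → x ∈ C ∨ y ∈ C) ∧
          (∑ x ∈ C, Sum.elim (fun _ => k + 1) (fun _ => 1) x) ≤
            (Fintype.card V / 2 - F.card) * (k + 2) + k) := by
  classical
  rw [show Fintype.card V / 2 = M.card by rw [hM.card_eq_two_mul]; omega]
  constructor
  · rintro ⟨X, A, B, hcov, -, -, -, hA, hB, hX, hAl⟩
    obtain ⟨F, hFM, hFA, C, hC, hw⟩ := hM.exists_cover_of_bipartition hcov hA hB k
    refine ⟨F, hFM, by omega, C, hC, hw.trans ?_⟩
    rw [show M.card - F.card = A.card by omega]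
    omega
  · rintro ⟨F, hFM, hFl, C, hC, hw⟩
    obtain ⟨X, A, B, hcov, hAB, hAX, hBX, hA, hB, hX, hAF⟩ :=
      hM.exists_bipartition_of_cover hFM hC hw
    exact ⟨X, A, B, hcov, hAB, hAX, hBX, hA, hB, hX, by omega⟩
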